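/- Let M and N be 2-parameter rectangle persistence modules with underlying open rectangles (a₁,b₁)×(a₂,b₂) and (c₁,d₁)×(c₂,d₂). Then the interleaving distance is given exactly by d_I(M,N) = min{ max{ min_i (b_i−a_i)/2 , min_i (d_i−c_i)/2 } , max{ ‖c−a‖_∞ , ‖d−b‖_∞ } }. -/

import Mathlib

open Classical

noncomputable section

/-- A point of the parameter space `ℝⁿ`. -/
abbrev Pt (n : ℕ) := Fin n → ℝ

/-- Shift of a point by the diagonal vector `(ε, …, ε)`. -/
def shiftPt {n : ℕ} (u : Pt n) (ε : ℝ) : Pt n := fun i => u i + ε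

lemma shiftPt_mono {n : ℕ} {u v : Pt n} (ε : ℝ) (h : u ≤ v) :
    shiftPt u ε ≤ shiftPt v ε := fun i => add_le_add (h i) le_rfl

lemma le_shiftPt {n : ℕ} (u : Pt n) {ε : ℝ} (hε : 0 ≤ ε) : u ≤ shiftPt u ε :=
  fun i => le_add_of_nonneg_right hε

/-- An `n`-parameter persistence module over the field `k`. -/
structure PersMod (k : Type) [Field k] (n : ℕ) where
  obj : Pt n → Type
  [acg : ∀ u, AddCommGroup (obj u)]
  [mod : ∀ u, Module k (obj u)]
  map : ∀ {u v : Pt n}, u ≤ v → (obj u →ₗ[k] obj v)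
  map_id : ∀ u : Pt n, map (le_refl u) = LinearMap.id
  map_comp : ∀ {u v w : Pt n} (h1 : u ≤ v) (h2 : v ≤ w),
    (map h2).comp (map h1) = map (h1.trans h2)

attribute [instance] PersMod.acg PersMod.mod

variable {k : Type} [Field k] {n : ℕ}

/-- A morphism of persistence modules. -/
structure PersHom (M N : PersMod k n) where
  app : ∀ u, M.obj u →ₗ[k] N.obj u
  natural : ∀ {u v : Pt n} (h : u ≤ v),
    (app v).comp (M.map h) = (N.map h).comp (app u)

/-- A morphism is trivial when every component is the zero map. -/
def PersHom.Trivial {M N : PersMod k n} (f : PersHom M N) : Prop := ∀ u, f.app u = 0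

/-- The `ε`-shift of a persistence module. -/
def PersMod.shift (M : PersMod k n) (ε : ℝ) : PersMod k n where
  obj u := M.obj (shiftPt u ε)
  map h := M.map (shiftPt_mono ε h)
  map_id u := M.map_id _
  map_comp h1 h2 := M.map_comp _ _

/-- `(f, g)` is an `ε`-interleaving pair between `M` and `N`. -/
def IsInterleavingPair (M N : PersMod k n) (ε : ℝ) (hε : 0 ≤ ε)
    (f : PersHom M (N.shift ε)) (g : PersHom N (M.shift ε)) : Prop :=
  (∀ u : Pt n, (g.app (shiftPt u ε)).comp (f.app u) =
      M.map ((le_shiftPt u hε).trans (le_shiftPt _ hε))) ∧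
  (∀ u : Pt n, (f.app (shiftPt u ε)).comp (g.app u) =
      N.map ((le_shiftPt u hε).trans (le_shiftPt _ hε)))

/-- `M` and `N` are `ε`-interleaved. -/
def Interleaved (M N : PersMod k n) (ε : ℝ) : Prop :=
  ∃ (hε : 0 ≤ ε) (f : PersHom M (N.shift ε)) (g : PersHom N (M.shift ε)),
    IsInterleavingPair M N ε hε f g

/-- The interleaving distance, with value in the extended reals. -/
def interleavingDist (M N : PersMod k n) : EReal :=
  sInf {x : EReal | ∃ ε : ℝ, Interleaved M N ε ∧ x = (ε : EReal)}

/-- `M` is `ε`-trivial : all transition maps `M_u → M_{u+(ε,…,ε)}` vanish. -/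
def EpsTrivial (M : PersMod k n) (ε : ℝ) : Prop :=
  ∀ (u : Pt n) (h : u ≤ shiftPt u ε), M.map h = 0

/-- The zero persistence module. -/
def ZeroMod (k : Type) [Field k] (n : ℕ) : PersMod k n where
  obj _ := PUnit
  map _ := 0
  map_id _ := by apply LinearMap.ext; intro x; exact Subsingleton.elim _ _
  map_comp _ _ := by apply LinearMap.ext; intro x; exact Subsingleton.elim _ _

/-- The space at `u` of the interval module on `I` : all of `k` if `u ∈ I`, `0` otherwise. -/
def segSpace (k : Type) [Field k] {n : ℕ} (I : Set (Pt n)) (u : Pt n) : Submodule k k where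
  carrier := {x | u ∉ I → x = 0}
  add_mem' := by intro x y hx hy h; simp only [Set.mem_setOf_eq] at *; rw [hx h, hy h, add_zero]
  zero_mem' := fun _ => rfl
  smul_mem' := by intro c x hx h; simp only [Set.mem_setOf_eq] at *; rw [hx h, smul_zero]

/-- The interval persistence module on an order-convex set `I` : `k` on `I` with identity
internal transition maps, `0` elsewhere. -/
def IntervalMod (k : Type) [Field k] {n : ℕ} (I : Set (Pt n)) (hI : I.OrdConnected) :
    PersMod k n where
  obj u := segSpace k I u
  map {u v} h :=
    { toFun := fun x => ⟨if v ∈ I then (x : k) else 0, by intro hv; simp [hv]⟩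
      map_add' := by intro x y; apply Subtype.ext; by_cases hv : v ∈ I <;> simp [hv]
      map_smul' := by intro c x; apply Subtype.ext; by_cases hv : v ∈ I <;> simp [hv] }
  map_id u := by
    apply LinearMap.ext; intro x
    apply Subtype.ext
    by_cases hu : u ∈ I
    · simp [hu]
    · simp [hu, x.2 hu]
  map_comp {u v w} h1 h2 := by
    apply LinearMap.ext; intro x
    apply Subtype.ext
    by_cases hw : w ∈ I
    · by_cases hv : v ∈ I
      · simp [hw, hv]
      · by_cases hu : u ∈ I
        · exact absurd (hI.out hu hw ⟨h1, h2⟩) hv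
        · simp [hw, hv, x.2 hu]
    · simp [hw]

/-- The open box `∏ᵢ (aᵢ, bᵢ)` with extended-real endpoints. -/
def box {n : ℕ} (a b : Fin n → EReal) : Set (Pt n) :=
  {u | ∀ i, a i < (u i : EReal) ∧ (u i : EReal) < b i}

lemma box_ordConnected {n : ℕ} (a b : Fin n → EReal) : (box a b).OrdConnected := by
  constructor
  intro u hu w hw v hv i
  exact ⟨lt_of_lt_of_le (hu i).1 (by exact_mod_cast hv.1 i),
    lt_of_le_of_lt (by exact_mod_cast hv.2 i) (hw i).2⟩

/-- The rectangle persistence module with underlying open rectangle `∏ᵢ (aᵢ, bᵢ)`. -/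
def RectMod (k : Type) [Field k] {n : ℕ} (a b : Fin n → EReal) : PersMod k n :=
  IntervalMod k (box a b) (box_ordConnected a b)

/-- Subtraction of extended reals with the conventions `(±∞) − (±∞) = 0`. -/
def esub (x y : EReal) : EReal :=
  if (x = ⊤ ∧ y = ⊤) ∨ (x = ⊥ ∧ y = ⊥) then 0 else x - y

/-- Absolute value on the extended reals (`|±∞| = +∞`). -/
def eabs (x : EReal) : EReal := max x (-x)

/-- The `ℓ^∞`-distance `‖x − y‖_∞` on extended `ℝⁿ`. -/
def supDist {n : ℕ} (x y : Fin n → EReal) : EReal := ⨆ i, eabs (esub (x i) (y i))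

/-- The closed formula for the interleaving distance between the rectangle modules with
rectangles `∏ (aᵢ, bᵢ)` and `∏ (cᵢ, dᵢ)`. -/
def dIFormula {n : ℕ} (a b c d : Fin n → EReal) : EReal :=
  min (max (⨅ i, esub (b i) (a i) / 2) (⨅ i, esub (d i) (c i) / 2))
      (max (supDist c a) (supDist d b))

/-- `M` and `N` are isomorphic persistence modules. -/
def PersIso (M N : PersMod k n) : Prop :=
  ∃ f : PersHom M N, ∀ u, Function.Bijective (f.app u)

/-- `M` is a non-zero persistence module. -/
def PersMod.Nonzero (M : PersMod k n) : Prop := ∃ (u : Pt n) (x : M.obj u), x ≠ 0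

/-- Direct sum of two persistence modules. -/
def dirSum (M N : PersMod k n) : PersMod k n where
  obj u := M.obj u × N.obj u
  map h := (M.map h).prodMap (N.map h)
  map_id u := by
    apply LinearMap.ext; intro x
    show ((M.map (le_refl u)) x.1, (N.map (le_refl u)) x.2) = x
    rw [M.map_id, N.map_id]; rfl
  map_comp h1 h2 := by
    apply LinearMap.ext; intro x
    show ((M.map _) ((M.map _) x.1), (N.map _) ((N.map _) x.2))
      = ((M.map _) x.1, (N.map _) x.2)
    have hM : (M.map h2) ((M.map h1) x.1) = (M.map (h1.trans h2)) x.1 := by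
      rw [← M.map_comp h1 h2]; rfl
    have hN : (N.map h2) ((N.map h1) x.2) = (N.map (h1.trans h2)) x.2 := by
      rw [← N.map_comp h1 h2]; rfl
    rw [hM, hN]

/-- Zigzag-connectedness of a subset of `ℝⁿ`. -/
def ZigzagConnected {n : ℕ} (I : Set (Pt n)) : Prop :=
  ∀ u ∈ I, ∀ v ∈ I,
    Relation.ReflTransGen (fun x y => x ∈ I ∧ y ∈ I ∧ (x ≤ y ∨ y ≤ x)) u v

/-- `I` is an interval in `ℝⁿ`: nonempty, order-convex and zigzag-connected. -/
def IsInterval {n : ℕ} (I : Set (Pt n)) : Prop :=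
  I.Nonempty ∧ I.OrdConnected ∧ ZigzagConnected I

/-- A partial multibijection `Fin m ⇸ Fin k'`, encoded by an `Option`-valued map that is
injective on matched indices. -/
def PartialInj {m k' : ℕ} (σ : Fin m → Option (Fin k')) : Prop :=
  ∀ i j l, σ i = some l → σ j = some l → i = j

/-- `σ` is an `ε`-matching between the barcodes `A` and `B` (families of intervals). -/
def IsEpsMatching (k : Type) [Field k] {n m k' : ℕ}
    (A : Fin m → Set (Pt n)) (hA : ∀ i, (A i).OrdConnected)
    (B : Fin k' → Set (Pt n)) (hB : ∀ j, (B j).OrdConnected)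
    (σ : Fin m → Option (Fin k')) (ε : ℝ) : Prop :=
  PartialInj σ ∧
  (∀ i, σ i = none → EpsTrivial (IntervalMod k (A i) (hA i)) (2 * ε)) ∧
  (∀ j, (∀ i, σ i ≠ some j) → EpsTrivial (IntervalMod k (B j) (hB j)) (2 * ε)) ∧
  (∀ i j, σ i = some j →
    Interleaved (IntervalMod k (A i) (hA i)) (IntervalMod k (B j) (hB j)) ε)

/-- The bottleneck distance between the interval decomposable modules with barcodes
`A` and `B`. -/
def bottleneckDist (k : Type) [Field k] {n m k' : ℕ}
    (A : Fin m → Set (Pt n)) (hA : ∀ i, (A i).OrdConnected)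
    (B : Fin k' → Set (Pt n)) (hB : ∀ j, (B j).OrdConnected) : EReal :=
  sInf {x : EReal | ∃ (ε : ℝ) (σ : Fin m → Option (Fin k')),
    0 ≤ ε ∧ IsEpsMatching k A hA B hB σ ε ∧ x = (ε : EReal)}

/-!
A morphism `k_I → k_J` of interval modules commutes with the identity transition maps, so if it
is nonzero at `p`, then `J` contains every point of `I` below `p` and `I` contains every point of
`J` above `p`. If one rectangle contains both `p` and `p + 2ε`, the composite of an
`ε`-interleaving is nonzero at `p`; applied to both morphisms of the interleaving, this pins every
edge of one rectangle within `ε` of the corresponding edge of the other. Conversely, rectangles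
whose edges are `ε`-close are `ε`-interleaved by the canonical morphisms, and rectangles that are
both too thin to contain such a pair `p`, `p + 2ε` by the zero morphisms.
-/

namespace EReal

lemma add_coe_le_add_coe_iff {x y : EReal} (ε : ℝ) : x + ε ≤ y + ε ↔ x ≤ y :=
  (addLECancellable_coe ε).add_le_add_iff_right

lemma add_coe_lt_add_coe_iff {x y : EReal} (ε : ℝ) : x + ε < y + ε ↔ x < y := by
  simp only [← not_le, add_coe_le_add_coe_iff]

lemma le_add_coe_of_forall_lt {a c : EReal} {ε : ℝ}
    (h : ∀ x : ℝ, a < x → c < ((x + ε : ℝ) : EReal)) : c ≤ a + ε := by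
  refine le_of_forall_lt_iff_le.1 fun z hz => (h (z - ε) ?_).le.trans_eq (by simp)
  rwa [← add_coe_lt_add_coe_iff ε, ← coe_add, _root_.sub_add_cancel]

lemma le_add_coe_of_forall_add_lt {b d : EReal} {ε : ℝ}
    (h : ∀ x : ℝ, ((x + ε : ℝ) : EReal) < b → (x : EReal) < d) : b ≤ d + ε := by
  refine le_of_forall_lt_iff_le.1 fun z hz => not_lt.1 fun hzb => hz.not_gt ?_
  have := add_lt_add_right_coe (h (z - ε) (by rwa [_root_.sub_add_cancel])) ε
  rwa [← coe_add, _root_.sub_add_cancel] at this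

lemma coe_lt_div_two_iff {x : EReal} {ε : ℝ} :
    (ε : EReal) < x / 2 ↔ ((2 * ε : ℝ) : EReal) < x := by
  rw [lt_div_iff two_pos (coe_ne_top 2), mul_comm]
  norm_cast

end EReal

lemma eabs_nonneg (x : EReal) : 0 ≤ eabs x := by
  rcases le_total 0 x with h | h
  · exact le_max_of_le_left h
  · exact le_max_of_le_right (EReal.neg_nonneg.2 h)

lemma esub_nonneg {x y : EReal} (h : y ≤ x) : 0 ≤ esub x y := by
  unfold esub
  split_ifs
  · exact le_rfl
  · exact (EReal.sub_nonneg (by tauto) (by tauto)).2 h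

lemma eabs_esub_le_iff {x y : EReal} {s : ℝ} (hs : 0 ≤ s) :
    eabs (esub x y) ≤ s ↔ x ≤ y + s ∧ y ≤ x + s := by
  unfold eabs esub
  induction x using EReal.rec <;> induction y using EReal.rec <;>
    simp_all [← EReal.coe_add, ← EReal.coe_neg, ← EReal.coe_sub]
  constructor <;> rintro ⟨h1, h2⟩ <;> constructor <;> linarith

lemma eabs_esub_comm (x y : EReal) : eabs (esub x y) = eabs (esub y x) := by
  unfold eabs esub
  induction x using EReal.rec <;> induction y using EReal.rec <;>
    simp_all [← EReal.coe_sub]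
  rw [← EReal.coe_neg, ← EReal.coe_neg, neg_sub, neg_sub, max_comm]

lemma esub_eq_sub {a b : EReal} (ha : a ≠ ⊤) (hb : b ≠ ⊥) : esub b a = b - a :=
  if_neg (by tauto)

lemma lt_esub_iff {a b : EReal} (ha : a ≠ ⊤) (hb : b ≠ ⊥) {t : ℝ} :
    (t : EReal) < esub b a ↔ a + t < b := by
  rw [esub_eq_sub ha hb, EReal.lt_sub_iff_add_lt (.inr (EReal.coe_ne_top t)) (.inl ha), add_comm]

lemma lt_esub_of_lt_of_add_lt {a b : EReal} {x t : ℝ} (ha : a < x)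
    (hb : ((x + t : ℝ) : EReal) < b) : (t : EReal) < esub b a :=
  (lt_esub_iff ha.ne_top hb.ne_bot).2 ((EReal.add_lt_add_right_coe ha t).trans hb)

lemma exists_lt_of_lt_esub {a b : EReal} (ha : a ≠ ⊤) (hb : b ≠ ⊥) {t : ℝ}
    (h : (t : EReal) < esub b a) : ∃ x : ℝ, a < x ∧ ((x + t : ℝ) : EReal) < b := by
  obtain ⟨y, hay, hyb⟩ := EReal.lt_iff_exists_real_btwn.1 ((lt_esub_iff ha hb).1 h)
  refine ⟨y - t, ?_, by rwa [sub_add_cancel]⟩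
  rwa [← EReal.add_coe_lt_add_coe_iff t, ← EReal.coe_add, sub_add_cancel]

lemma shiftPt_shiftPt_self (u : Pt n) (ε : ℝ) : shiftPt (shiftPt u ε) ε = shiftPt u (2 * ε) :=
  funext fun i => by simp only [shiftPt]; ring

lemma shiftPt_update (u : Pt n) (i : Fin n) (x ε : ℝ) :
    shiftPt (Function.update u i x) ε = Function.update (shiftPt u ε) i (x + ε) := by
  funext j
  rcases eq_or_ne j i with rfl | hj <;> simp [shiftPt, *]

section Box

variable {a b c d : Fin n → EReal}

lemma update_mem_box {u : Pt n} (hu : u ∈ box a b) {i : Fin n} {x : ℝ}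
    (hax : a i < x) (hxb : (x : EReal) < b i) : Function.update u i x ∈ box a b := by
  intro j
  rcases eq_or_ne j i with rfl | hj
  · simpa using And.intro hax hxb
  · simpa [hj] using hu j

lemma lt_esub_of_mem_box {t : ℝ} {p : Pt n} (hp : p ∈ box a b) (hpt : shiftPt p t ∈ box a b)
    (i : Fin n) : (t : EReal) < esub (b i) (a i) :=
  lt_esub_of_lt_of_add_lt (hp i).1 (hpt i).2

lemma exists_mem_box_shiftPt_mem (ha : ∀ i, a i ≠ ⊤) (hb : ∀ i, b i ≠ ⊥) {t : ℝ} (ht : 0 ≤ t)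
    (h : ∀ i, (t : EReal) < esub (b i) (a i)) : ∃ p, p ∈ box a b ∧ shiftPt p t ∈ box a b := by
  choose p hap hpb using fun i => exists_lt_of_lt_esub (ha i) (hb i) (h i)
  have hp_le : ∀ i, ((p i : ℝ) : EReal) ≤ ((p i + t : ℝ) : EReal) := fun i =>
    EReal.coe_le_coe_iff.2 (le_add_of_nonneg_right ht)
  exact ⟨p, fun i => ⟨hap i, (hp_le i).trans_lt (hpb i)⟩,
    fun i => ⟨(hap i).trans_le (hp_le i), hpb i⟩⟩

lemma le_add_of_forall_le_mem_box {ε : ℝ} {p : Pt n} (hp : p ∈ box a b)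
    (h : ∀ w ≤ p, w ∈ box a b → shiftPt w ε ∈ box c d) (i : Fin n) : c i ≤ a i + ε := by
  refine EReal.le_add_coe_of_forall_lt fun x hx => ?_
  have hw : Function.update p i (min x (p i)) ∈ box a b :=
    update_mem_box hp (by rw [EReal.coe_strictMono.monotone.map_min]; exact lt_min hx (hp i).1)
      ((EReal.coe_le_coe_iff.2 (min_le_right _ _)).trans_lt (hp i).2)
  have hc := (h _ (update_le_self_iff.2 (min_le_right _ _)) hw i).1
  simp only [shiftPt, Function.update_self] at hc
  exact hc.trans_le (EReal.coe_le_coe_iff.2 (by simp))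

lemma le_add_of_forall_ge_mem_box {ε : ℝ} {p : Pt n} (hp : shiftPt p ε ∈ box c d)
    (h : ∀ v, p ≤ v → shiftPt v ε ∈ box c d → v ∈ box a b) (i : Fin n) : d i ≤ b i + ε := by
  refine EReal.le_add_coe_of_forall_add_lt fun x hx => ?_
  have hv : shiftPt (Function.update p i (max x (p i))) ε ∈ box c d := by
    rw [shiftPt_update]
    refine update_mem_box hp
      ((hp i).1.trans_le (EReal.coe_le_coe_iff.2 (add_le_add_left (le_max_right _ _) _))) ?_
    rw [← max_add_add_right, EReal.coe_strictMono.monotone.map_max]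
    exact max_lt hx (hp i).2
  have hb := (h _ (le_update_self_iff.2 (le_max_right _ _)) hv i).2
  simp only [Function.update_self] at hb
  exact (EReal.coe_le_coe_iff.2 (le_max_left _ _)).trans_lt hb

end Box

section PersMod

variable {M N : PersMod k n} {ε : ℝ}

instance : Zero (PersHom M N) :=
  ⟨{ app := fun _ => 0, natural := fun _ => by simp }⟩

lemma Interleaved.symm (h : Interleaved M N ε) : Interleaved N M ε :=
  let ⟨hε, f, g, hgf, hfg⟩ := h
  ⟨hε, g, f, hfg, hgf⟩

lemma EpsTrivial.map_shiftPt_shiftPt (hM : EpsTrivial M (2 * ε)) (hε : 0 ≤ ε) (u : Pt n)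
    (h : u ≤ shiftPt (shiftPt u ε) ε) : M.map h = 0 := by
  have h₁ : u ≤ shiftPt u (2 * ε) := le_shiftPt u (by positivity)
  rw [← M.map_comp h₁ (shiftPt_shiftPt_self u ε).ge, hM u h₁, LinearMap.comp_zero]

lemma interleaved_of_epsTrivial (hε : 0 ≤ ε) (hM : EpsTrivial M (2 * ε))
    (hN : EpsTrivial N (2 * ε)) : Interleaved M N ε :=
  ⟨hε, 0, 0, fun u => (hM.map_shiftPt_shiftPt hε u _).symm ▸ LinearMap.zero_comp _,
    fun u => (hN.map_shiftPt_shiftPt hε u _).symm ▸ LinearMap.zero_comp _⟩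

end PersMod

/-- The condition under which the identity on `k` over `I ∩ J` is a morphism `k_I → k_J`. -/
def HomCompatible (I J : Set (Pt n)) : Prop :=
  ∀ ⦃u v : Pt n⦄, u ≤ v → u ∈ I → v ∈ J → v ∈ I ∧ u ∈ J

namespace IntervalMod

variable {I J : Set (Pt n)} {hI : I.OrdConnected} {hJ : J.OrdConnected}

lemma mem_of_ne_zero {u : Pt n} {x : (IntervalMod k I hI).obj u} (hx : x ≠ 0) : u ∈ I :=
  by_contra fun hu => hx (Subtype.ext (x.2 hu))

lemma epsTrivial {t : ℝ} (h : ∀ u ∈ I, shiftPt u t ∉ I) : EpsTrivial (IntervalMod k I hI) t := by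
  intro u hu
  refine LinearMap.ext fun x => Subtype.ext ?_
  show (if shiftPt u t ∈ I then x.val else 0) = 0
  by_cases hut : shiftPt u t ∈ I
  · rw [if_pos hut, x.2 fun hu => h u hu hut]
  · rw [if_neg hut]

def hom (h : HomCompatible I J) : PersHom (IntervalMod k I hI) (IntervalMod k J hJ) where
  app u :=
    ({ toFun := fun x => ⟨if u ∈ J then (x : k) else 0, fun hu => by simp [hu]⟩
       map_add' := fun x y => by ext; split_ifs <;> simp
       map_smul' := fun c x => by ext; split_ifs <;> simp } : segSpace k I u →ₗ[k] segSpace k J u)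
  natural {u v} huv := by
    refine LinearMap.ext fun x => Subtype.ext ?_
    show (if v ∈ J then (if v ∈ I then x.val else 0) else 0)
      = if v ∈ J then (if u ∈ J then x.val else 0) else 0
    by_cases hv : v ∈ J
    · by_cases hu : u ∈ I
      · obtain ⟨hvI, huJ⟩ := h huv hu hv
        simp [hv, hvI, huJ]
      · simp [x.2 hu]
    · simp [hv]

lemma mem_of_le_of_app_ne_zero (φ : PersHom (IntervalMod k I hI) (IntervalMod k J hJ))
    {p v : Pt n} {x : (IntervalMod k I hI).obj p} (hx : φ.app p x ≠ 0) (hpv : p ≤ v)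
    (hv : v ∈ J) : v ∈ I := by
  by_contra hvI
  have h0 : (IntervalMod k I hI).map hpv x = 0 := Subtype.ext (if_neg hvI)
  have hnat : φ.app v ((IntervalMod k I hI).map hpv x)
      = (IntervalMod k J hJ).map hpv (φ.app p x) :=
    LinearMap.congr_fun (φ.natural hpv) x
  rw [h0, map_zero] at hnat
  exact hx (Subtype.ext ((if_pos hv).symm.trans (congrArg Subtype.val hnat.symm)))

lemma mem_of_ge_of_app_ne_zero (φ : PersHom (IntervalMod k I hI) (IntervalMod k J hJ))
    {p w : Pt n} {x : (IntervalMod k I hI).obj p} (hx : φ.app p x ≠ 0) (hwp : w ≤ p)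
    (hw : w ∈ I) : w ∈ J := by
  have hp : p ∈ I := mem_of_ne_zero (ne_zero_of_map hx)
  let y : (IntervalMod k I hI).obj w := ⟨x.val, fun h => absurd hw h⟩
  have hy : (IntervalMod k I hI).map hwp y = x :=
    Subtype.ext (if_pos hp : (if p ∈ I then x.val else 0) = x.val)
  by_contra hwJ
  have h0 : φ.app w y = 0 := Subtype.ext ((φ.app w y).2 hwJ)
  have hnat : φ.app p ((IntervalMod k I hI).map hwp y)
      = (IntervalMod k J hJ).map hwp (φ.app w y) :=
    LinearMap.congr_fun (φ.natural hwp) y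
  rw [hy, h0, map_zero] at hnat
  exact hx hnat

variable {ε : ℝ}

lemma hom_app_comp_hom_app (hIJ : HomCompatible I ((shiftPt · ε) ⁻¹' J))
    (hJI : HomCompatible J ((shiftPt · ε) ⁻¹' I))
    (hIJI : ∀ u ∈ I, shiftPt (shiftPt u ε) ε ∈ I → shiftPt u ε ∈ J) (u : Pt n)
    (h : u ≤ shiftPt (shiftPt u ε) ε) :
    ((hom (hI := hJ) (hJ := hI.preimage_mono fun _ _ => shiftPt_mono ε) hJI).app
        (shiftPt u ε)).comp
      ((hom (hI := hI) (hJ := hJ.preimage_mono fun _ _ => shiftPt_mono ε) hIJ).app u)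
      = (IntervalMod k I hI).map h := by
  refine LinearMap.ext fun x => Subtype.ext ?_
  show (if shiftPt (shiftPt u ε) ε ∈ I then (if shiftPt u ε ∈ J then x.val else 0) else 0)
    = if shiftPt (shiftPt u ε) ε ∈ I then x.val else 0
  by_cases hu2 : shiftPt (shiftPt u ε) ε ∈ I
  · by_cases hu : u ∈ I
    · simp [hu2, hIJI u hu hu2]
    · simp [x.2 hu]
  · simp [hu2]

theorem interleaved_of_homCompatible (hε : 0 ≤ ε)
    (hIJ : HomCompatible I ((shiftPt · ε) ⁻¹' J)) (hJI : HomCompatible J ((shiftPt · ε) ⁻¹' I))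
    (hIJI : ∀ u ∈ I, shiftPt (shiftPt u ε) ε ∈ I → shiftPt u ε ∈ J)
    (hJIJ : ∀ u ∈ J, shiftPt (shiftPt u ε) ε ∈ J → shiftPt u ε ∈ I) :
    Interleaved (IntervalMod k I hI) (IntervalMod k J hJ) ε :=
  ⟨hε, hom hIJ, hom hJI, fun u => hom_app_comp_hom_app hIJ hJI hIJI u _,
    fun u => hom_app_comp_hom_app hJI hIJ hJIJ u _⟩

end IntervalMod

section RectMod

variable {a b c d : Fin n → EReal} {ε : ℝ}

lemma homCompatible_box_shiftPt (hca : ∀ i, c i ≤ a i + ε) (hdb : ∀ i, d i ≤ b i + ε) :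
    HomCompatible (box a b) ((shiftPt · ε) ⁻¹' box c d) := by
  intro u v huv hu hv
  refine ⟨fun i => ⟨(hu i).1.trans_le (EReal.coe_le_coe_iff.2 (huv i)), ?_⟩, fun i => ⟨?_, ?_⟩⟩
  · rw [← EReal.add_coe_lt_add_coe_iff ε, ← EReal.coe_add]
    exact (hv i).2.trans_le (hdb i)
  · exact (hca i).trans_lt (EReal.add_lt_add_right_coe (hu i).1 ε)
  · exact (EReal.coe_le_coe_iff.2 (add_le_add_left (huv i) ε)).trans_lt (hv i).2

lemma shiftPt_mem_box_of_mem (hca : ∀ i, c i ≤ a i + ε) (hbd : ∀ i, b i ≤ d i + ε) {u : Pt n}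
    (hu : u ∈ box a b) (hu2 : shiftPt (shiftPt u ε) ε ∈ box a b) : shiftPt u ε ∈ box c d := by
  refine fun i => ⟨(hca i).trans_lt (EReal.add_lt_add_right_coe (hu i).1 ε), ?_⟩
  rw [← EReal.add_coe_lt_add_coe_iff ε, ← EReal.coe_add]
  exact (hu2 i).2.trans_le (hbd i)

lemma supDist_le_iff {x y : Fin n → EReal} (hε : 0 ≤ ε) :
    supDist x y ≤ ε ↔ ∀ i, x i ≤ y i + ε ∧ y i ≤ x i + ε := by
  simp only [supDist, iSup_le_iff, eabs_esub_le_iff hε]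

lemma supDist_comm (x y : Fin n → EReal) : supDist x y = supDist y x := by
  simp only [supDist, eabs_esub_comm]

lemma supDist_nonneg [NeZero n] (x y : Fin n → EReal) : 0 ≤ supDist x y :=
  (eabs_nonneg _).trans (le_iSup (fun i => eabs (esub (x i) (y i))) 0)

lemma interleaved_rectMod_of_supDist_le (hε : 0 ≤ ε) (hca : supDist c a ≤ ε)
    (hdb : supDist d b ≤ ε) : Interleaved (RectMod k a b) (RectMod k c d) ε := by
  rw [supDist_le_iff hε] at hca hdb
  exact IntervalMod.interleaved_of_homCompatible hε
    (homCompatible_box_shiftPt (fun i => (hca i).1) (fun i => (hdb i).1))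
    (homCompatible_box_shiftPt (fun i => (hca i).2) (fun i => (hdb i).2))
    (fun _ => shiftPt_mem_box_of_mem (fun i => (hca i).1) (fun i => (hdb i).2))
    (fun _ => shiftPt_mem_box_of_mem (fun i => (hca i).2) (fun i => (hdb i).1))

lemma RectMod.le_add_of_app_ne_zero (φ : PersHom (RectMod k a b) ((RectMod k c d).shift ε))
    {p : Pt n} {x : (RectMod k a b).obj p} (hx : φ.app p x ≠ 0) (i : Fin n) :
    c i ≤ a i + ε ∧ d i ≤ b i + ε := by
  have hC := (box_ordConnected c d).preimage_mono fun _ _ => shiftPt_mono (n := n) ε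
  exact ⟨le_add_of_forall_le_mem_box (IntervalMod.mem_of_ne_zero (ne_zero_of_map hx))
      (fun _ hwp hw => IntervalMod.mem_of_ge_of_app_ne_zero (hJ := hC) φ hx hwp hw) i,
    le_add_of_forall_ge_mem_box (IntervalMod.mem_of_ne_zero (hI := hC) hx)
      (fun _ hpv hv => IntervalMod.mem_of_le_of_app_ne_zero (hJ := hC) φ hx hpv hv) i⟩

lemma supDist_le_of_interleaved (h : Interleaved (RectMod k a b) (RectMod k c d) ε) {p : Pt n}
    (hp : p ∈ box a b) (hp2 : shiftPt (shiftPt p ε) ε ∈ box a b) :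
    supDist c a ≤ ε ∧ supDist d b ≤ ε := by
  obtain ⟨hε, f, g, hgf, -⟩ := h
  let x : (RectMod k a b).obj p := ⟨1, fun h => absurd hp h⟩
  have hgfx : (g.app (shiftPt p ε)).comp (f.app p) x ≠ 0 := by
    rw [hgf p]
    exact fun h0 => one_ne_zero ((if_pos hp2).symm.trans (congrArg Subtype.val h0))
  have hf := RectMod.le_add_of_app_ne_zero f (ne_zero_of_map (f := g.app (shiftPt p ε)) hgfx)
  have hg := RectMod.le_add_of_app_ne_zero g hgfx
  simp only [supDist_le_iff hε]
  exact ⟨fun i => ⟨(hf i).1, (hg i).1⟩, fun i => ⟨(hf i).2, (hg i).2⟩⟩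

lemma exists_mem_box_of_lt_iInf (ha : ∀ i, a i ≠ ⊤) (hb : ∀ i, b i ≠ ⊥) (hε : 0 ≤ ε)
    (h : (ε : EReal) < ⨅ i, esub (b i) (a i) / 2) :
    ∃ p, p ∈ box a b ∧ shiftPt (shiftPt p ε) ε ∈ box a b := by
  simp only [shiftPt_shiftPt_self]
  exact exists_mem_box_shiftPt_mem ha hb (by positivity)
    fun i => EReal.coe_lt_div_two_iff.1 (h.trans_le (iInf_le _ i))

lemma epsTrivial_rectMod_of_iInf_lt (h : (⨅ i, esub (b i) (a i) / 2) < ε) :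
    EpsTrivial (RectMod k a b) (2 * ε) := by
  obtain ⟨i, hi⟩ := iInf_lt_iff.1 h
  exact IntervalMod.epsTrivial fun u hu hu2 =>
    hi.not_gt (EReal.coe_lt_div_two_iff.2 (lt_esub_of_mem_box hu hu2 i))

lemma dIFormula_le_of_interleaved (ha : ∀ i, a i ≠ ⊤) (hb : ∀ i, b i ≠ ⊥) (hc : ∀ i, c i ≠ ⊤)
    (hd : ∀ i, d i ≠ ⊥) (h : Interleaved (RectMod k a b) (RectMod k c d) ε) :
    dIFormula a b c d ≤ ε := by
  obtain ⟨hε, -⟩ := id h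
  rcases le_or_gt (max (⨅ i, esub (b i) (a i) / 2) (⨅ i, esub (d i) (c i) / 2)) ε with hT | hT
  · exact min_le_of_left_le hT
  refine min_le_of_right_le (max_le_iff.2 ?_)
  rcases lt_max_iff.1 hT with hA | hC
  · obtain ⟨p, hp, hp2⟩ := exists_mem_box_of_lt_iInf ha hb hε hA
    exact supDist_le_of_interleaved h hp hp2
  · obtain ⟨p, hp, hp2⟩ := exists_mem_box_of_lt_iInf hc hd hε hC
    rw [supDist_comm, supDist_comm d]
    exact supDist_le_of_interleaved h.symm hp hp2

lemma interleaved_of_dIFormula_lt [NeZero n] (hab : ∀ i, a i ≤ b i) {z : ℝ}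
    (h : dIFormula a b c d < z) : Interleaved (RectMod k a b) (RectMod k c d) z := by
  rcases min_lt_iff.1 h with hT | hS
  · obtain ⟨hA, hC⟩ := max_lt_iff.1 hT
    have hz : (0 : EReal) ≤ z :=
      (le_iInf fun i => EReal.div_nonneg (esub_nonneg (hab i)) zero_le_two).trans hA.le
    exact interleaved_of_epsTrivial (EReal.coe_nonneg.1 hz) (epsTrivial_rectMod_of_iInf_lt hA)
      (epsTrivial_rectMod_of_iInf_lt hC)
  · obtain ⟨hA, hC⟩ := max_lt_iff.1 hS
    exact interleaved_rectMod_of_supDist_le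
      (EReal.coe_nonneg.1 ((supDist_nonneg c a).trans hA.le)) hA.le hC.le

end RectMod

theorem interleavingDist_rectMod_general (a b c d : Fin 2 → EReal)
    (hab : ∀ i, a i < b i) (hcd : ∀ i, c i < d i) :
    interleavingDist (RectMod k a b) (RectMod k c d) = dIFormula a b c d := by
  refine le_antisymm (EReal.le_of_forall_lt_iff_le.1 fun z hz => ?_) (le_sInf ?_)
  · exact sInf_le ⟨z, interleaved_of_dIFormula_lt (fun i => (hab i).le) hz, rfl⟩
  · rintro _ ⟨ε, h, rfl⟩
    exact dIFormula_le_of_interleaved (fun i => (hab i).ne_top) (fun i => (hab i).ne_bot)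
      (fun i => (hcd i).ne_top) (fun i => (hcd i).ne_bot) h

theorem interleavingDist_rectMod (a b c d : Fin 2 → EReal)
    (ha : ∀ i, a i ≠ ⊤) (hb : ∀ i, b i ≠ ⊥)
    (hc : ∀ i, c i ≠ ⊤) (hd : ∀ i, d i ≠ ⊥) (hab : ∀ i, a i < b i) (hcd : ∀ i, c i < d i) :
    interleavingDist (RectMod k a b) (RectMod k c d) = dIFormula a b c d :=
  interleavingDist_rectMod_general a b c d hab hcd

end
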